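/- arXiv:1603.07199 — 4 statements merged into one kernel-verified Lean document; each statement's English description precedes it below -/
import Mathlib

section
/- In a positively ordered abelian monoid W, if there exists no additive order-preserving map f : W → [0,∞] with f(y) = 1 (no state normalized at y), then some multiple ny of y is properly infinite, i.e., 2(ny) ≤ ny for some n ≥ 1. -/
open scoped ENNReal

/-- Compact containment (way-below) relation: `a ≪ b` iff for every monotone sequence
with a supremum dominating `b`, some term dominates `a`. -/
def CuWayBelow {S : Type*} [Preorder S] (a b : S) : Prop :=
  ∀ c : ℕ → S, Monotone c → ∀ s : S, IsLUB (Set.range c) s → b ≤ s → ∃ n, a ≤ c n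

/-- The axioms (O1)-(O4) of the category Cu, together with positivity of the order. -/
structure CuSemigroup (S : Type*) [AddCommMonoid S] [PartialOrder S] [IsOrderedAddMonoid S] : Prop where
  pos : ∀ x : S, 0 ≤ x
  O1 : ∀ c : ℕ → S, Monotone c → ∃ s : S, IsLUB (Set.range c) s
  O2 : ∀ a : S, ∃ c : ℕ → S, (∀ n, CuWayBelow (c n) (c (n + 1))) ∧ IsLUB (Set.range c) a
  O3 : ∀ a' a b' b : S, CuWayBelow a' a → CuWayBelow b' b → CuWayBelow (a' + b') (a + b)
  O4 : ∀ c d : ℕ → S, Monotone c → Monotone d → ∀ s t : S,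
      IsLUB (Set.range c) s → IsLUB (Set.range d) t →
      IsLUB (Set.range fun n => c n + d n) (s + t)

/-- Simplicity: every nonzero element is full. -/
def CuSimple (S : Type*) [AddCommMonoid S] [PartialOrder S] [IsOrderedAddMonoid S] : Prop :=
  ∀ x y : S, x ≠ 0 → y ≠ 0 → ∀ y' : S, CuWayBelow y' y → ∃ n : ℕ, y' ≤ n • x

/-- A full sequence: increasing and absorbing every compactly contained element. -/
def CuFullSeq {S : Type*} [AddCommMonoid S] [PartialOrder S] [IsOrderedAddMonoid S] (x : ℕ → S) : Prop :=
  Monotone x ∧ ∀ z' z : S, CuWayBelow z' z → ∃ n m : ℕ, z' ≤ m • x n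

/-- The value `β(x,y) = inf { l/k : k ≥ 1, k•x ≤ l•y }`. -/
noncomputable def beta {W : Type*} [AddCommMonoid W] [PartialOrder W] [IsOrderedAddMonoid W] (x y : W) : ℝ :=
  sInf {r : ℝ | ∃ k l : ℕ, 0 < k ∧ k • x ≤ l • y ∧ r = (l : ℝ) / (k : ℝ)}

/-- ω-comparison. -/
def OmegaComparison (S : Type*) [AddCommMonoid S] [PartialOrder S] [IsOrderedAddMonoid S] : Prop :=
  ∀ (x' x : S) (y : ℕ → S), CuWayBelow x' x →
    (∀ j : ℕ, ∃ k : ℕ, 1 ≤ k ∧ (k + 1) • x ≤ k • y j) →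
    ∃ n : ℕ, x' ≤ ∑ j ∈ Finset.range n, y j

/-- β-comparison. -/
def BetaComparison (S : Type*) [AddCommMonoid S] [PartialOrder S] [IsOrderedAddMonoid S] : Prop :=
  ∀ x y : S, (∃ n : ℕ, x ≤ n • y) → beta x y = 0 → x ≤ y

/-!
If no multiple of `y` is properly infinite then `m • y ≤ n • y` forces `m ≤ n`. Restricted to
the order ideal of `y` (where `y` is an order unit), `β(x, y) = inf {l/k : k • x ≤ l • y}` is
subadditive and monotone, `β₋(x, y) = sup {l/k : l • y ≤ k • x}` is superadditive, and
`β₋ ≤ β` with `β₋(y, y) = 1 = β(y, y)`. Without cancellation these do not yet give an additive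
map, so pass to `stableBeta x = inf_h (β(x + h) - β₋(h))`: its increments
`h ↦ stableBeta (x + h) - stableBeta h` are bounded between `β₋(x)` and `β(x)`, monotone in `x`,
and form a cocycle in `x`. Averaging them with a translation-invariant mean on the abelian monoid
(abelian monoids are amenable; the mean comes from Hahn–Banach dominated by Day's upper mean)
yields an additive monotone map equal to `1` at `y`; it is then extended by `∞` off the order
ideal.
-/

section ProperlyInfinite

variable {W : Type*} [AddCommMonoid W] [PartialOrder W] [IsOrderedAddMonoid W]

lemma add_nsmul_le_of_succ_nsmul_le {y : W} {n : ℕ} (h : (n + 1) • y ≤ n • y) (j : ℕ) :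
    (n + j) • y ≤ n • y := by
  induction j with
  | zero => rfl
  | succ j ih =>
    calc (n + (j + 1)) • y = (n + 1) • y + j • y := by rw [← add_nsmul, add_right_comm, add_assoc]
      _ ≤ n • y + j • y := add_le_add_left h _
      _ = (n + j) • y := (add_nsmul _ _ _).symm
      _ ≤ n • y := ih

lemma le_of_nsmul_le_nsmul_of_not_properlyInfinite (hpos : ∀ x : W, 0 ≤ x) {y : W}
    (hy : ¬ ∃ n : ℕ, 1 ≤ n ∧ 2 • (n • y) ≤ n • y) {m n : ℕ} (h : m • y ≤ n • y) : m ≤ n := by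
  by_contra! hnm
  have hsucc : (n + 1) • y ≤ n • y := (nsmul_le_nsmul_left (hpos y) hnm).trans h
  refine hy ⟨n + 1, Nat.le_add_left 1 n, ?_⟩
  calc 2 • ((n + 1) • y) = (n + (n + 2)) • y := by rw [← mul_nsmul']; ring_nf
    _ ≤ n • y := add_nsmul_le_of_succ_nsmul_le hsucc _
    _ ≤ (n + 1) • y := nsmul_le_nsmul_left (hpos y) n.le_succ

end ProperlyInfinite

section ConditionallyComplete

variable {α : Type*} [ConditionallyCompleteLattice α] [AddGroup α] [AddLeftMono α] [AddRightMono α]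
  {s t : Set α} {a : α}

lemma le_csInf_add_csInf (hs : s.Nonempty) (ht : t.Nonempty) (h : ∀ r ∈ s, ∀ u ∈ t, a ≤ r + u) :
    a ≤ sInf s + sInf t := by
  have := hs.to_subtype
  have := ht.to_subtype
  rw [sInf_eq_iInf', sInf_eq_iInf']
  exact le_ciInf_add_ciInf fun r u => h r r.2 u u.2

lemma csSup_add_csSup_le (hs : s.Nonempty) (ht : t.Nonempty) (h : ∀ r ∈ s, ∀ u ∈ t, r + u ≤ a) :
    sSup s + sSup t ≤ a := by
  have := hs.to_subtype
  have := ht.to_subtype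
  rw [sSup_eq_iSup', sSup_eq_iSup']
  exact ciSup_add_ciSup_le fun r u => h r r.2 u u.2

end ConditionallyComplete

section NsmulArith

variable {W : Type*} [AddCommMonoid W]

lemma mul_nsmul_add (k k' : ℕ) (x x' : W) : (k * k') • (x + x') = k' • k • x + k • k' • x' := by
  rw [nsmul_add, mul_nsmul, mul_nsmul']

lemma add_mul_nsmul (k k' l l' : ℕ) (y : W) : (l * k' + l' * k) • y = k' • l • y + k • l' • y := by
  rw [add_nsmul, mul_nsmul, mul_nsmul]

lemma natCast_div_add_natCast_div {k k' : ℕ} (hk : 0 < k) (hk' : 0 < k') (l l' : ℕ) :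
    (l : ℝ) / k + l' / k' = ((l * k' + l' * k : ℕ) : ℝ) / (k * k' : ℕ) := by
  rw [div_add_div _ _ (by positivity) (by positivity)]
  push_cast
  ring

end NsmulArith

section BddFun

variable (H : Type*)

def BddFun : Submodule ℝ (H → ℝ) where
  carrier := {φ | ∃ C, ∀ h, |φ h| ≤ C}
  zero_mem' := ⟨0, by simp⟩
  add_mem' := by
    rintro φ ψ ⟨C, hC⟩ ⟨D, hD⟩
    exact ⟨C + D, fun h => (abs_add_le _ _).trans (add_le_add (hC h) (hD h))⟩
  smul_mem' := by
    rintro c φ ⟨C, hC⟩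
    refine ⟨|c| * C, fun h => ?_⟩
    rw [Pi.smul_apply, smul_eq_mul, abs_mul]
    exact mul_le_mul_of_nonneg_left (hC h) (abs_nonneg c)

variable {H}

lemma const_mem_bddFun (c : ℝ) : (fun _ => c) ∈ BddFun H := ⟨|c|, fun _ => le_rfl⟩

lemma translate_mem_bddFun [Add H] {φ : H → ℝ} (hφ : φ ∈ BddFun H) (t : H) :
    (fun h => φ (h + t)) ∈ BddFun H := by
  obtain ⟨C, hC⟩ := hφ
  exact ⟨C, fun h => hC (h + t)⟩

end BddFun

section InvariantMean

variable (H : Type*) [AddCommMonoid H]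

structure InvariantMean where
  toFun : (H → ℝ) → ℝ
  map_add : ∀ φ ∈ BddFun H, ∀ ψ ∈ BddFun H, toFun (φ + ψ) = toFun φ + toFun ψ
  mono : ∀ φ ∈ BddFun H, ∀ ψ ∈ BddFun H, φ ≤ ψ → toFun φ ≤ toFun ψ
  map_const : ∀ c : ℝ, toFun (fun _ => c) = c
  map_translate : ∀ φ ∈ BddFun H, ∀ t : H, toFun (fun h => φ (h + t)) = toFun φ

instance : CoeFun (InvariantMean H) fun _ => (H → ℝ) → ℝ := ⟨InvariantMean.toFun⟩

variable {H}

noncomputable def supAverage (φ : H → ℝ) (k : ℕ+) (t : Fin k → H) : ℝ :=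
  ⨆ h, (∑ i, φ (h + t i)) / k

/-- Day's upper mean. -/
noncomputable def upperMean (φ : H → ℝ) : ℝ :=
  ⨅ s : Σ k : ℕ+, Fin k → H, supAverage φ s.1 s.2

variable {φ ψ : H → ℝ} {c : ℝ}

lemma average_le_of_le (hφ : ∀ h, φ h ≤ c) (k : ℕ+) (t : Fin k → H) (h : H) :
    (∑ i, φ (h + t i)) / k ≤ c := by
  rw [div_le_iff₀ (by positivity)]
  simpa [mul_comm] using Finset.sum_le_sum fun i (_ : i ∈ Finset.univ) => hφ (h + t i)

lemma le_average_of_le (hφ : ∀ h, c ≤ φ h) (k : ℕ+) (t : Fin k → H) (h : H) :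
    c ≤ (∑ i, φ (h + t i)) / k := by
  rw [le_div_iff₀ (by positivity)]
  simpa [mul_comm] using Finset.sum_le_sum fun i (_ : i ∈ Finset.univ) => hφ (h + t i)

lemma bddAbove_range_average (hφ : φ ∈ BddFun H) (k : ℕ+) (t : Fin k → H) :
    BddAbove (Set.range fun h => (∑ i, φ (h + t i)) / k) := by
  obtain ⟨C, hC⟩ := hφ
  exact ⟨C, by rintro _ ⟨h, rfl⟩; exact average_le_of_le (fun h => le_of_abs_le (hC h)) k t h⟩

lemma average_le_supAverage (hφ : φ ∈ BddFun H) (k : ℕ+) (t : Fin k → H) (h : H) :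
    (∑ i, φ (h + t i)) / k ≤ supAverage φ k t :=
  le_ciSup (bddAbove_range_average hφ k t) h

lemma supAverage_le_of_le (hφ : ∀ h, φ h ≤ c) (k : ℕ+) (t : Fin k → H) : supAverage φ k t ≤ c :=
  ciSup_le (average_le_of_le hφ k t)

lemma le_supAverage_of_le (hφ : φ ∈ BddFun H) (hc : ∀ h, c ≤ φ h) (k : ℕ+) (t : Fin k → H) :
    c ≤ supAverage φ k t :=
  (le_average_of_le hc k t 0).trans (average_le_supAverage hφ k t 0)

lemma bddBelow_range_supAverage (hφ : φ ∈ BddFun H) :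
    BddBelow (Set.range fun s : Σ k : ℕ+, Fin k → H => supAverage φ s.1 s.2) := by
  obtain ⟨C, hC⟩ := hφ
  exact ⟨-C, by
    rintro _ ⟨s, rfl⟩
    exact le_supAverage_of_le ⟨C, hC⟩ (fun h => neg_le_of_abs_le (hC h)) s.1 s.2⟩

lemma upperMean_le_supAverage (hφ : φ ∈ BddFun H) (k : ℕ+) (t : Fin k → H) :
    upperMean φ ≤ supAverage φ k t :=
  ciInf_le (bddBelow_range_supAverage hφ) ⟨k, t⟩

lemma upperMean_le_of_le (hφ : φ ∈ BddFun H) (hc : ∀ h, φ h ≤ c) : upperMean φ ≤ c :=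
  (upperMean_le_supAverage hφ 1 fun _ => 0).trans (supAverage_le_of_le hc 1 _)

lemma le_upperMean_of_le (hφ : φ ∈ BddFun H) (hc : ∀ h, c ≤ φ h) : c ≤ upperMean φ :=
  le_ciInf fun s => le_supAverage_of_le hφ hc s.1 s.2

/-- Each inner sum over `t` (resp. `u`) is an average of a translate of `φ` (resp. `ψ`). -/
lemma supAverage_add_le (hφ : φ ∈ BddFun H) (hψ : ψ ∈ BddFun H) (k l : ℕ+) (t : Fin k → H)
    (u : Fin l → H) :
    supAverage (φ + ψ) (k * l)
        (fun i => t (finProdFinEquiv.symm i).1 + u (finProdFinEquiv.symm i).2) ≤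
      supAverage φ k t + supAverage ψ l u := by
  refine ciSup_le fun h => ?_
  dsimp only
  have hsum : ∑ i : Fin (k * l : ℕ+), (φ + ψ) (h + (t (finProdFinEquiv.symm i).1 +
      u (finProdFinEquiv.symm i).2)) =
      ∑ j, ∑ i, φ ((h + u j) + t i) + ∑ i, ∑ j, ψ ((h + t i) + u j) := by
    refine (Fintype.sum_equiv finProdFinEquiv.symm _
      (fun p => (φ + ψ) (h + (t p.1 + u p.2))) fun _ => rfl).trans ?_
    simp only [Pi.add_apply, Finset.sum_add_distrib, Fintype.sum_prod_type]
    rw [Finset.sum_comm (f := fun i j => φ (h + (t i + u j)))]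
    simp only [add_assoc, add_comm (u _)]
  have hφ_avg : ∀ j, ∑ i, φ ((h + u j) + t i) ≤ supAverage φ k t * k := fun j =>
    (div_le_iff₀ (by positivity)).1 (average_le_supAverage hφ k t _)
  have hψ_avg : ∀ i, ∑ j, ψ ((h + t i) + u j) ≤ supAverage ψ l u * l := fun i =>
    (div_le_iff₀ (by positivity)).1 (average_le_supAverage hψ l u _)
  have hφ_sum := Finset.sum_le_sum fun j (_ : j ∈ Finset.univ) => hφ_avg j
  have hψ_sum := Finset.sum_le_sum fun i (_ : i ∈ Finset.univ) => hψ_avg i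
  simp only [Finset.sum_const, Finset.card_univ, Fintype.card_fin, nsmul_eq_mul] at hφ_sum hψ_sum
  rw [hsum, div_le_iff₀ (by positivity)]
  simp only [PNat.mul_coe, Nat.cast_mul]
  nlinarith

lemma upperMean_add_le (hφ : φ ∈ BddFun H) (hψ : ψ ∈ BddFun H) :
    upperMean (φ + ψ) ≤ upperMean φ + upperMean ψ :=
  le_ciInf_add_ciInf fun s s' =>
    (upperMean_le_supAverage (add_mem hφ hψ) _ _).trans (supAverage_add_le hφ hψ _ _ s.2 s'.2)

lemma upperMean_smul (hc : 0 ≤ c) : upperMean (c • φ) = c * upperMean φ := by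
  simp only [upperMean, supAverage, Real.mul_iInf_of_nonneg hc, Real.mul_iSup_of_nonneg hc,
    Pi.smul_apply, smul_eq_mul, ← Finset.mul_sum, mul_div_assoc]

/-- Averaging `φ (· + t) - φ` over `0, t, …, (k - 1) • t` telescopes, so its upper mean is `O(1/k)`. -/
lemma upperMean_translate_sub_nonpos (hφ : φ ∈ BddFun H) (t : H) :
    upperMean (fun h => φ (h + t) - φ h) ≤ 0 := by
  obtain ⟨C, hC⟩ := hφ
  have hmem : (fun h => φ (h + t) - φ h) ∈ BddFun H :=
    sub_mem (translate_mem_bddFun ⟨C, hC⟩ t) ⟨C, hC⟩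
  have hbound : ∀ k : ℕ+, upperMean (fun h => φ (h + t) - φ h) ≤ 2 * C / k := by
    intro k
    refine (upperMean_le_supAverage hmem k fun i => (i : ℕ) • t).trans (ciSup_le fun h => ?_)
    have htel : ∑ i : Fin k, (φ (h + (i : ℕ) • t + t) - φ (h + (i : ℕ) • t)) =
        φ (h + (k : ℕ) • t) - φ (h + 0 • t) := by
      rw [Fin.sum_univ_eq_sum_range (fun i => φ (h + i • t + t) - φ (h + i • t)),
        ← Finset.sum_range_sub (fun i => φ (h + i • t))]
      simp only [succ_nsmul, add_assoc]
    rw [htel]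
    gcongr
    linarith [(abs_le.1 (hC (h + (k : ℕ) • t))).2, (abs_le.1 (hC (h + 0 • t))).1]
  refine le_of_forall_pos_le_add fun ε hε => ?_
  obtain ⟨k, hk⟩ := exists_nat_gt (2 * C / ε)
  have hC0 : 0 ≤ C := (abs_nonneg _).trans (hC 0)
  have hk0 : 0 < k := by exact_mod_cast (by positivity : 0 ≤ 2 * C / ε).trans_lt hk
  refine (hbound ⟨k, hk0⟩).trans ?_
  rw [zero_add, PNat.mk_coe, div_le_iff₀ (by positivity)]
  linarith [(div_lt_iff₀ hε).1 hk]

/-- Hahn–Banach: a linear functional dominated by the upper mean is an invariant mean. -/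
lemma nonempty_invariantMean : Nonempty (InvariantMean H) := by
  obtain ⟨L, -, hL⟩ := exists_extension_of_le_sublinear (⟨⊥, 0⟩ : BddFun H →ₗ.[ℝ] ℝ)
    (fun φ => upperMean (φ : H → ℝ)) (fun _ hc _ => upperMean_smul hc.le)
    (fun φ ψ => upperMean_add_le φ.2 ψ.2) fun φ => by
      rw [(Submodule.mem_bot ℝ).1 φ.2]
      exact le_upperMean_of_le (zero_mem _) fun _ => le_rfl
  have hL_le : ∀ (φ : BddFun H) (c : ℝ), (∀ h, (φ : H → ℝ) h ≤ c) → L φ ≤ c := fun φ _ hc =>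
    (hL φ).trans (upperMean_le_of_le φ.2 hc)
  classical
  let M : (H → ℝ) → ℝ := fun φ => if hφ : φ ∈ BddFun H then L ⟨φ, hφ⟩ else 0
  have hM : ∀ φ (hφ : φ ∈ BddFun H), M φ = L ⟨φ, hφ⟩ := fun φ hφ => dif_pos hφ
  refine ⟨⟨M, fun φ hφ ψ hψ => ?_, fun φ hφ ψ hψ hφψ => ?_, fun c => ?_, fun φ hφ t => ?_⟩⟩
  · rw [hM φ hφ, hM ψ hψ, hM _ (add_mem hφ hψ), ← map_add]
    rfl
  · rw [hM φ hφ, hM ψ hψ, ← sub_nonpos, ← map_sub]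
    exact hL_le _ 0 fun h => sub_nonpos.2 (hφψ h)
  · have hc := const_mem_bddFun (H := H) c
    rw [hM _ hc]
    refine le_antisymm (hL_le _ c fun _ => le_rfl) (neg_le_neg_iff.1 ?_)
    rw [← map_neg]
    exact hL_le _ (-c) fun _ => le_rfl
  · have hφt := translate_mem_bddFun hφ t
    rw [hM _ hφt, hM φ hφ]
    refine le_antisymm (sub_nonpos.1 ?_) (sub_nonpos.1 ?_) <;> rw [← map_sub]
    · exact (hL _).trans (upperMean_translate_sub_nonpos hφ t)
    · refine (hL _).trans (le_of_eq_of_le ?_ (upperMean_translate_sub_nonpos (neg_mem hφ) t))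
      congr 1
      funext h
      simp only [Submodule.coe_sub, Pi.sub_apply, Pi.neg_apply]
      ring

namespace InvariantMean

variable (M : InvariantMean H) {φ : H → ℝ} {c : ℝ}

lemma le_of_forall_le (hφ : φ ∈ BddFun H) (h : ∀ x, φ x ≤ c) : M φ ≤ c :=
  (M.mono φ hφ _ (const_mem_bddFun c) h).trans_eq (M.map_const c)

lemma le_of_forall_ge (hφ : φ ∈ BddFun H) (h : ∀ x, c ≤ φ x) : c ≤ M φ :=
  (M.map_const c).symm.trans_le (M.mono _ (const_mem_bddFun c) φ hφ h)

end InvariantMean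

end InvariantMean

section Beta

variable {W : Type*} [AddCommMonoid W] [PartialOrder W] [IsOrderedAddMonoid W]

noncomputable def lowerBeta (x y : W) : ℝ :=
  sSup {r : ℝ | ∃ k l : ℕ, 0 < k ∧ l • y ≤ k • x ∧ r = (l : ℝ) / (k : ℝ)}

variable {x y : W}

lemma div_le_div_of_nsmul_le (hE : ∀ m n : ℕ, m • y ≤ n • y → m ≤ n) {k l k' l' : ℕ}
    (hk : 0 < k) (hk' : 0 < k') (hlow : l • y ≤ k • x) (hup : k' • x ≤ l' • y) :
    (l : ℝ) / k ≤ l' / k' := by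
  have : (l * k') • y ≤ (l' * k) • y :=
    calc (l * k') • y = k' • l • y := mul_nsmul _ _ _
      _ ≤ k' • k • x := nsmul_le_nsmul_right hlow _
      _ = k • k' • x := by rw [← mul_nsmul, ← mul_nsmul, mul_comm]
      _ ≤ k • l' • y := nsmul_le_nsmul_right hup _
      _ = (l' * k) • y := (mul_nsmul _ _ _).symm
  rw [div_le_div_iff₀ (by positivity) (by positivity)]
  exact_mod_cast hE _ _ this

lemma beta_nonneg : 0 ≤ beta x y :=
  Real.sInf_nonneg <| by rintro _ ⟨k, l, -, -, rfl⟩; positivity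

lemma beta_le {k l : ℕ} (hk : 0 < k) (h : k • x ≤ l • y) : beta x y ≤ l / k :=
  csInf_le ⟨0, by rintro _ ⟨k, l, -, -, rfl⟩; positivity⟩ ⟨k, l, hk, h, rfl⟩

lemma le_beta (hunit : ∀ x : W, ∃ n : ℕ, x ≤ n • y) {c : ℝ}
    (h : ∀ k l : ℕ, 0 < k → k • x ≤ l • y → c ≤ l / k) : c ≤ beta x y := by
  obtain ⟨n, hn⟩ := hunit x
  exact le_csInf ⟨_, 1, n, one_pos, by rwa [one_nsmul], rfl⟩ <| by
    rintro _ ⟨k, l, hk, hkl, rfl⟩; exact h k l hk hkl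

lemma beta_mono (hunit : ∀ x : W, ∃ n : ℕ, x ≤ n • y) {x' : W} (hx : x ≤ x') :
    beta x y ≤ beta x' y :=
  le_beta hunit fun _ _ hk h => beta_le hk ((nsmul_le_nsmul_right hx _).trans h)

lemma beta_add_le (hunit : ∀ x : W, ∃ n : ℕ, x ≤ n • y) (x' : W) :
    beta (x + x') y ≤ beta x y + beta x' y := by
  obtain ⟨n, hn⟩ := hunit x
  obtain ⟨n', hn'⟩ := hunit x'
  refine le_csInf_add_csInf ⟨_, 1, n, one_pos, by rwa [one_nsmul], rfl⟩
    ⟨_, 1, n', one_pos, by rwa [one_nsmul], rfl⟩ ?_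
  rintro _ ⟨k, l, hk, h, rfl⟩ _ ⟨k', l', hk', h', rfl⟩
  rw [natCast_div_add_natCast_div hk hk']
  refine beta_le (Nat.mul_pos hk hk') ?_
  rw [mul_nsmul_add, add_mul_nsmul]
  exact add_le_add (nsmul_le_nsmul_right h _) (nsmul_le_nsmul_right h' _)

lemma beta_self_le_one : beta y y ≤ 1 := by
  simpa using beta_le (x := y) (y := y) one_pos (le_refl (1 • y))

lemma le_lowerBeta (hunit : ∀ x : W, ∃ n : ℕ, x ≤ n • y) (hE : ∀ m n : ℕ, m • y ≤ n • y → m ≤ n)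
    {k l : ℕ} (hk : 0 < k) (h : l • y ≤ k • x) : (l : ℝ) / k ≤ lowerBeta x y := by
  obtain ⟨n, hn⟩ := hunit x
  refine le_csSup ⟨n, ?_⟩ ⟨k, l, hk, h, rfl⟩
  rintro _ ⟨k, l, hk, h, rfl⟩
  simpa using div_le_div_of_nsmul_le hE hk one_pos h (by rwa [one_nsmul])

omit [IsOrderedAddMonoid W] in
lemma lowerBeta_le (hpos : ∀ x : W, 0 ≤ x) {c : ℝ}
    (h : ∀ k l : ℕ, 0 < k → l • y ≤ k • x → (l : ℝ) / k ≤ c) : lowerBeta x y ≤ c :=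
  csSup_le ⟨_, 1, 0, one_pos, by simpa using hpos x, rfl⟩ <| by
    rintro _ ⟨k, l, hk, hkl, rfl⟩; exact h k l hk hkl

lemma lowerBeta_nonneg (hpos : ∀ x : W, 0 ≤ x) (hunit : ∀ x : W, ∃ n : ℕ, x ≤ n • y)
    (hE : ∀ m n : ℕ, m • y ≤ n • y → m ≤ n) : 0 ≤ lowerBeta x y := by
  simpa using le_lowerBeta hunit hE (k := 1) (l := 0) one_pos (by simpa using hpos x)

lemma lowerBeta_le_beta (hpos : ∀ x : W, 0 ≤ x) (hunit : ∀ x : W, ∃ n : ℕ, x ≤ n • y)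
    (hE : ∀ m n : ℕ, m • y ≤ n • y → m ≤ n) : lowerBeta x y ≤ beta x y :=
  lowerBeta_le hpos fun _ _ hk hlow =>
    le_beta hunit fun _ _ hk' hup => div_le_div_of_nsmul_le hE hk hk' hlow hup

lemma add_lowerBeta_le (hpos : ∀ x : W, 0 ≤ x) (hunit : ∀ x : W, ∃ n : ℕ, x ≤ n • y)
    (hE : ∀ m n : ℕ, m • y ≤ n • y → m ≤ n) (x' : W) :
    lowerBeta x y + lowerBeta x' y ≤ lowerBeta (x + x') y := by
  refine csSup_add_csSup_le ⟨_, 1, 0, one_pos, by simpa using hpos x, rfl⟩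
    ⟨_, 1, 0, one_pos, by simpa using hpos x', rfl⟩ ?_
  rintro _ ⟨k, l, hk, h, rfl⟩ _ ⟨k', l', hk', h', rfl⟩
  rw [natCast_div_add_natCast_div hk hk']
  refine le_lowerBeta hunit hE (Nat.mul_pos hk hk') ?_
  rw [mul_nsmul_add, add_mul_nsmul]
  exact add_le_add (nsmul_le_nsmul_right h _) (nsmul_le_nsmul_right h' _)

lemma one_le_lowerBeta_self (hunit : ∀ x : W, ∃ n : ℕ, x ≤ n • y)
    (hE : ∀ m n : ℕ, m • y ≤ n • y → m ≤ n) : 1 ≤ lowerBeta y y := by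
  simpa using le_lowerBeta hunit hE (x := y) (k := 1) (l := 1) one_pos le_rfl

end Beta

section StableBeta

variable {W : Type*} [AddCommMonoid W] [PartialOrder W] [IsOrderedAddMonoid W] {x y : W}

/-- Minimising over the context `h` compensates for the lack of cancellation in `W`. -/
noncomputable def stableBeta (x y : W) : ℝ :=
  ⨅ h : W, (beta (x + h) y - lowerBeta h y)

variable (hpos : ∀ x : W, 0 ≤ x) (hunit : ∀ x : W, ∃ n : ℕ, x ≤ n • y)
  (hE : ∀ m n : ℕ, m • y ≤ n • y → m ≤ n)

include hpos hunit hE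

lemma lowerBeta_le_beta_add_sub (h : W) : lowerBeta x y ≤ beta (x + h) y - lowerBeta h y := by
  have := add_lowerBeta_le hpos hunit hE (x := x) h
  have := lowerBeta_le_beta hpos hunit hE (x := x + h)
  linarith

lemma stableBeta_le (h : W) : stableBeta x y ≤ beta (x + h) y - lowerBeta h y :=
  ciInf_le ⟨lowerBeta x y, by rintro _ ⟨h, rfl⟩; exact lowerBeta_le_beta_add_sub hpos hunit hE h⟩ h

lemma stableBeta_mono {x' : W} (hx : x ≤ x') : stableBeta x y ≤ stableBeta x' y :=
  le_ciInf fun h => (stableBeta_le hpos hunit hE h).trans <|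
    sub_le_sub_right (beta_mono hunit (add_le_add_left hx h)) _

lemma stableBeta_add_le (h : W) : stableBeta (x + h) y ≤ stableBeta h y + beta x y := by
  rw [← sub_le_iff_le_add]
  refine le_ciInf fun h' => ?_
  have := stableBeta_le hpos hunit hE (x := x + h) h'
  have := beta_add_le hunit (x := x) (h + h')
  rw [add_assoc] at *
  linarith

lemma stableBeta_add_lowerBeta_le (h : W) :
    stableBeta h y + lowerBeta x y ≤ stableBeta (x + h) y := by
  refine le_ciInf fun h' => ?_
  have := stableBeta_le hpos hunit hE (x := h) (x + h')
  have := add_lowerBeta_le hpos hunit hE (x := x) h'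
  rw [add_left_comm, ← add_assoc] at *
  linarith

end StableBeta

section OrderUnitState

variable {W : Type*} [AddCommMonoid W] [PartialOrder W] [IsOrderedAddMonoid W] {x y : W}

noncomputable def stableBetaIncrement (x y : W) (h : W) : ℝ :=
  stableBeta (x + h) y - stableBeta h y

lemma stableBetaIncrement_zero : stableBetaIncrement (0 : W) y = fun _ => 0 :=
  funext fun h => by simp [stableBetaIncrement]

lemma stableBetaIncrement_add (x x' y : W) :
    stableBetaIncrement (x + x') y =
      (fun h => stableBetaIncrement x y (h + x')) + stableBetaIncrement x' y := by
  funext h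
  simp only [stableBetaIncrement, Pi.add_apply, add_assoc, add_comm x' h]
  ring

variable (hpos : ∀ x : W, 0 ≤ x) (hunit : ∀ x : W, ∃ n : ℕ, x ≤ n • y)
  (hE : ∀ m n : ℕ, m • y ≤ n • y → m ≤ n)

include hpos hunit hE

lemma lowerBeta_le_stableBetaIncrement (h : W) : lowerBeta x y ≤ stableBetaIncrement x y h :=
  le_sub_iff_add_le'.2 (stableBeta_add_lowerBeta_le hpos hunit hE h)

lemma stableBetaIncrement_le_beta (h : W) : stableBetaIncrement x y h ≤ beta x y :=
  sub_le_iff_le_add'.2 (stableBeta_add_le hpos hunit hE h)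

lemma stableBetaIncrement_mem_bddFun : stableBetaIncrement x y ∈ BddFun W :=
  ⟨beta x y, fun h => abs_le.2
    ⟨(neg_nonpos.2 beta_nonneg).trans ((lowerBeta_nonneg hpos hunit hE).trans
      (lowerBeta_le_stableBetaIncrement hpos hunit hE h)),
    stableBetaIncrement_le_beta hpos hunit hE h⟩⟩

theorem exists_monotone_addMonoidHom_eq_one : ∃ g : W →+ ℝ, Monotone g ∧ g y = 1 := by
  obtain ⟨M⟩ := nonempty_invariantMean (H := W)
  have hmem := fun x : W => stableBetaIncrement_mem_bddFun (x := x) hpos hunit hE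
  refine ⟨{ toFun := fun x => M (stableBetaIncrement x y), map_zero' := ?_, map_add' := ?_ },
    fun a b hab => ?_, ?_⟩
  · exact (congrArg M stableBetaIncrement_zero).trans (M.map_const 0)
  · intro a b
    show M _ = M _ + M _
    rw [stableBetaIncrement_add, M.map_add _ (translate_mem_bddFun (hmem a) b) _
      (hmem b), M.map_translate _ (hmem a)]
  · exact M.mono _ (hmem a) _ (hmem b) fun h =>
      sub_le_sub_right (stableBeta_mono hpos hunit hE (add_le_add_left hab h)) _
  · exact le_antisymm
      (M.le_of_forall_le (hmem y) fun h =>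
        (stableBetaIncrement_le_beta hpos hunit hE h).trans beta_self_le_one)
      (M.le_of_forall_ge (hmem y) fun h =>
        (one_le_lowerBeta_self hunit hE).trans (lowerBeta_le_stableBetaIncrement hpos hunit hE h))

end OrderUnitState

section OrderIdeal

variable {W : Type*} [AddCommMonoid W] [PartialOrder W] [IsOrderedAddMonoid W]

def orderIdeal (y : W) : AddSubmonoid W where
  carrier := {x | ∃ n : ℕ, x ≤ n • y}
  zero_mem' := ⟨0, by rw [zero_nsmul]⟩
  add_mem' := by
    rintro a b ⟨n, hn⟩ ⟨m, hm⟩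
    exact ⟨n + m, by rw [add_nsmul]; exact add_le_add hn hm⟩

variable {x x' y : W}

lemma self_mem_orderIdeal (y : W) : y ∈ orderIdeal y := ⟨1, by rw [one_nsmul]⟩

lemma mem_orderIdeal_of_le (hx' : x' ∈ orderIdeal y) (h : x ≤ x') : x ∈ orderIdeal y :=
  let ⟨n, hn⟩ := hx'
  ⟨n, h.trans hn⟩

lemma add_mem_orderIdeal_iff (hpos : ∀ x : W, 0 ≤ x) :
    x + x' ∈ orderIdeal y ↔ x ∈ orderIdeal y ∧ x' ∈ orderIdeal y :=
  ⟨fun h => ⟨mem_orderIdeal_of_le h (le_add_of_nonneg_right (hpos x')),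
    mem_orderIdeal_of_le h (le_add_of_nonneg_left (hpos x))⟩, fun h => add_mem h.1 h.2⟩

/-- A state on the order ideal of `y`, extended by `∞` outside it. -/
theorem exists_state_of_forall_nsmul_le_imp_le (hpos : ∀ x : W, 0 ≤ x)
    (hE : ∀ m n : ℕ, m • y ≤ n • y → m ≤ n) :
    ∃ f : W → ℝ≥0∞, (∀ a b : W, f (a + b) = f a + f b) ∧ Monotone f ∧ f 0 = 0 ∧ f y = 1 := by
  obtain ⟨g, hg, hgy⟩ := exists_monotone_addMonoidHom_eq_one
    (y := (⟨y, self_mem_orderIdeal y⟩ : orderIdeal y)) (fun x => hpos x)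
    (fun ⟨_, n, hn⟩ => ⟨n, hn⟩) (fun m n h => hE m n h)
  have hg0 : ∀ x, 0 ≤ g x := fun x => (map_zero g).symm.trans_le (hg (hpos x))
  classical
  refine ⟨fun x => if hx : x ∈ orderIdeal y then ENNReal.ofReal (g ⟨x, hx⟩) else ⊤,
    fun a b => ?_, fun a b hab => ?_, ?_, ?_⟩
  · dsimp only
    by_cases hab : a + b ∈ orderIdeal y
    · obtain ⟨ha, hb⟩ := (add_mem_orderIdeal_iff hpos).1 hab
      rw [dif_pos hab, dif_pos ha, dif_pos hb, ← ENNReal.ofReal_add (hg0 _) (hg0 _), ← map_add]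
      rfl
    · rw [dif_neg hab]
      rcases not_and_or.1 (mt (add_mem_orderIdeal_iff hpos).2 hab) with ha | hb
      · simp [ha]
      · simp [hb]
  · by_cases hb : b ∈ orderIdeal y
    · simp only [dif_pos hb, dif_pos (mem_orderIdeal_of_le hb hab)]
      exact ENNReal.ofReal_le_ofReal (hg (Subtype.mk_le_mk.2 hab))
    · simp only [dif_neg hb, le_top]
  · simp only [dif_pos (orderIdeal y).zero_mem]
    exact (congrArg ENNReal.ofReal (map_zero g)).trans ENNReal.ofReal_zero
  · simp only [dif_pos (self_mem_orderIdeal y), hgy, ENNReal.ofReal_one]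

end OrderIdeal

/-- If there is no state normalized at `y`, then some multiple of `y` is properly infinite. -/
theorem stmt1 {W : Type*} [AddCommMonoid W] [PartialOrder W] [IsOrderedAddMonoid W] (hpos : ∀ x : W, 0 ≤ x) (y : W)
    (h : ¬ ∃ f : W → ℝ≥0∞,
        (∀ a b : W, f (a + b) = f a + f b) ∧ Monotone f ∧ f 0 = 0 ∧ f y = 1) :
    ∃ n : ℕ, 1 ≤ n ∧ 2 • (n • y) ≤ n • y := by
  by_contra hy
  exact h (exists_state_of_forall_nsmul_le_imp_le hpos fun _ _ =>
    le_of_nsmul_le_nsmul_of_not_properlyInfinite hpos hy)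
end

section
/- Let W be a positively ordered abelian monoid, x ∈ W, and y₁, …, yₖ ∈ W such that x <ₛ yⱼ for each j (i.e., for each j there is m with (m+1)x ≤ m yⱼ). Then β(x, y₁ + ⋯ + yₖ) ≤ 1/k. -/
open scoped ENNReal

/-!
A single exponent `n` witnesses all the relations `x <ₛ yⱼ` at once: take `n` to be the product
of the individual witnesses, since `(m + 1) • x ≤ m • y` passes to every positive multiple of `m`.
Summing `(n + 1) • x ≤ n • yⱼ` over `j` gives `(k * (n + 1)) • x ≤ n • ∑ j, yⱼ`, so
`β(x, ∑ j, yⱼ) ≤ n / (k * (n + 1)) ≤ 1 / k`.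
-/

section

variable {W : Type*} [AddCommMonoid W] [PartialOrder W] [IsOrderedAddMonoid W]

theorem beta_le_of_nsmul_le {x y : W} {k l : ℕ} (hk : 0 < k) (h : k • x ≤ l • y) :
    beta x y ≤ (l : ℝ) / k := by
  refine csInf_le ⟨0, ?_⟩ ⟨k, l, hk, h, rfl⟩
  rintro r ⟨a, b, -, -, rfl⟩
  positivity

theorem succ_nsmul_le_nsmul_of_dvd {x y : W} (hx : 0 ≤ x) {m n : ℕ}
    (hm : (m + 1) • x ≤ m • y) (hmn : m ∣ n) (hn : 0 < n) : (n + 1) • x ≤ n • y := by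
  obtain ⟨q, rfl⟩ := hmn
  have hq : 1 ≤ q := Nat.pos_of_mul_pos_left hn
  calc (m * q + 1) • x ≤ (m * q + q) • x := nsmul_le_nsmul_left hx (by omega)
    _ = q • ((m + 1) • x) := by rw [← mul_nsmul']; ring_nf
    _ ≤ q • (m • y) := nsmul_le_nsmul_right hm q
    _ = (m * q) • y := by rw [← mul_nsmul, mul_comm]

theorem card_mul_succ_nsmul_le_nsmul_sum {ι : Type*} (s : Finset ι) {x : W} {y : ι → W} {n : ℕ}
    (h : ∀ j ∈ s, (n + 1) • x ≤ n • y j) : (s.card * (n + 1)) • x ≤ n • ∑ j ∈ s, y j := by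
  rw [mul_nsmul', Finset.smul_sum]
  exact Finset.card_nsmul_le_sum s _ _ h

end

/-- If `x <ₛ yⱼ` for `j = 1,…,k`, then `β(x, y₁ + ⋯ + y_k) ≤ 1/k`. -/
theorem stmt5 {W : Type*} [AddCommMonoid W] [PartialOrder W] [IsOrderedAddMonoid W] (hpos : ∀ x : W, 0 ≤ x)
    (x : W) (k : ℕ) (hk : 1 ≤ k) (y : Fin k → W)
    (h : ∀ j : Fin k, ∃ m : ℕ, 1 ≤ m ∧ (m + 1) • x ≤ m • y j) :
    beta x (∑ j, y j) ≤ 1 / (k : ℝ) := by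
  choose m hm_pos hm using h
  set n := ∏ j, m j
  have hn : 0 < n := Finset.prod_pos fun j _ => hm_pos j
  have hsum : (k * (n + 1)) • x ≤ n • ∑ j, y j := by
    simpa using card_mul_succ_nsmul_le_nsmul_sum Finset.univ fun j _ =>
      succ_nsmul_le_nsmul_of_dvd (hpos x) (hm j) (Finset.dvd_prod_of_mem m (Finset.mem_univ j)) hn
  calc beta x (∑ j, y j) ≤ (n : ℝ) / (k * (n + 1) : ℕ) := beta_le_of_nsmul_le (by positivity) hsum
    _ ≤ 1 / k := by
      push_cast
      rw [div_le_div_iff₀ (by positivity) (by positivity)]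
      nlinarith
end

section
/- Let S be a Cu-semigroup (a positively ordered abelian monoid satisfying: (O1) increasing sequences have suprema; (O2) every element is the supremum of a rapidly increasing sequence aₙ ≪ aₙ₊₁; (O3) compact containment is additive; (O4) suprema are additive). If (xₙ) is a full sequence in S (increasing, and for all z' ≪ z there exist n, m with z' ≤ m·xₙ), then the increasing sequence (n·xₙ) has supremum equal to the largest element of S; in particular, S has a largest element. -/
open scoped ENNReal

/-! Every `a ≪ t` lies below some `m • xₙ`, hence below `k • x_k` for `k = max m n`, hence below
the supremum `s` of `(k • x_k)`. By (O2) every `t` is a supremum of elements way below it,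
so `t ≤ s`. -/

theorem CuWayBelow.mono_right {S : Type*} [Preorder S] {a b b' : S} (h : CuWayBelow a b)
    (hb : b ≤ b') : CuWayBelow a b' :=
  fun c hc s hs hs' => h c hc s hs (hb.trans hs')

section CuSemigroup

variable {S : Type*} [AddCommMonoid S] [PartialOrder S] [IsOrderedAddMonoid S]

theorem CuSemigroup.le_of_forall_wayBelow_le (hCu : CuSemigroup S) {t s : S}
    (h : ∀ a, CuWayBelow a t → a ≤ s) : t ≤ s := by
  obtain ⟨c, hc, hlub⟩ := hCu.O2 t
  refine hlub.2 ?_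
  rintro _ ⟨k, rfl⟩
  exact h _ ((hc k).mono_right (hlub.1 ⟨k + 1, rfl⟩))

theorem CuFullSeq.monotone_nsmul (hCu : CuSemigroup S) {x : ℕ → S} (hfull : CuFullSeq x) :
    Monotone fun n => n • x n :=
  fun _ _ hmn => nsmul_le_nsmul (hfull.1 hmn) (hCu.pos _) hmn

theorem CuFullSeq.wayBelow_le_of_isLUB (hCu : CuSemigroup S) {x : ℕ → S} (hfull : CuFullSeq x)
    {s a t : S} (hs : IsLUB (Set.range fun n => n • x n) s) (hat : CuWayBelow a t) : a ≤ s := by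
  obtain ⟨n, m, hnm⟩ := hfull.2 a t hat
  calc a ≤ m • x n := hnm
    _ ≤ max m n • x (max m n) :=
      nsmul_le_nsmul (hfull.1 (le_max_right m n)) (hCu.pos _) (le_max_left m n)
    _ ≤ s := hs.1 ⟨max m n, rfl⟩

end CuSemigroup

/-- For a full sequence `(xₙ)` in a Cu-semigroup, the sequence `(n • xₙ)` has a supremum
which is the largest element of `S`; in particular `S` has a largest element. -/
theorem stmt9 {S : Type*} [AddCommMonoid S] [PartialOrder S] [IsOrderedAddMonoid S] (hCu : CuSemigroup S)
    (x : ℕ → S) (hfull : CuFullSeq x) :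
    ∃ s : S, IsLUB (Set.range fun n => n • x n) s ∧ ∀ t : S, t ≤ s := by
  obtain ⟨s, hs⟩ := hCu.O1 _ (hfull.monotone_nsmul hCu)
  exact ⟨s, hs, fun t => hCu.le_of_forall_wayBelow_le fun a hat =>
    hfull.wayBelow_le_of_isLUB hCu hs hat⟩
end

section
/- Let S be a Cu-semigroup and (xₙ) a full sequence in S. Then there exists a full sequence (xₙ') in S with xₙ' ≪ xₙ for each n. -/
open scoped ENNReal

/-!
Write every `xₙ` as the supremum of a rapidly increasing sequence `(cₙₖ)ₖ`. Since elements way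
below a fixed element form an upward directed set, one can build recursively an increasing
sequence `yₙ ≪ xₙ` that eventually dominates every `cₙₖ`; then `sup y ≥ xₙ` for all `n`. If
`z' ≪ z`, interpolate `z' ≪ z'' ≪ z`; fullness of `x` gives `z'' ≤ m • xₙ ≤ m • sup y`, and `O4`
makes `m • sup y` the supremum of `m • yₖ`, so `z' ≤ m • yₖ` for some `k`.
-/

namespace CuWayBelow

variable {S : Type*} [Preorder S] {a b c : S}

theorem le (h : CuWayBelow a b) : a ≤ b := by
  obtain ⟨n, hn⟩ := h (fun _ => b) monotone_const b
    (by simpa only [Set.range_const] using isLUB_singleton) le_rfl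
  exact hn

theorem trans_le (h : CuWayBelow a b) (hbc : b ≤ c) : CuWayBelow a c :=
  fun d hd s hs hcs => h d hd s hs (hbc.trans hcs)

end CuWayBelow

theorem LE.le.trans_cuWayBelow {S : Type*} [Preorder S] {a b c : S} (hab : a ≤ b)
    (hbc : CuWayBelow b c) : CuWayBelow a c := by
  intro d hd s hs hcs
  obtain ⟨n, hn⟩ := hbc d hd s hs hcs
  exact ⟨n, hab.trans hn⟩

namespace CuSemigroup

variable {S : Type*} [AddCommMonoid S] [PartialOrder S] [IsOrderedAddMonoid S]
  (hCu : CuSemigroup S)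
include hCu

theorem exists_wayBelow_seq (a : S) :
    ∃ d : ℕ → S, (∀ n, CuWayBelow (d n) (d (n + 1))) ∧ Monotone d ∧ IsLUB (Set.range d) a := by
  obtain ⟨d, hd, hlub⟩ := hCu.O2 a
  exact ⟨d, hd, monotone_nat_of_le_succ fun n => (hd n).le, hlub⟩

theorem exists_wayBelow_between {a b : S} (h : CuWayBelow a b) :
    ∃ c, CuWayBelow a c ∧ CuWayBelow c b := by
  obtain ⟨d, hd, hmono, hlub⟩ := hCu.exists_wayBelow_seq b
  obtain ⟨n, hn⟩ := h d hmono b hlub le_rfl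
  exact ⟨d (n + 1), hn.trans_cuWayBelow (hd n),
    (hd (n + 1)).trans_le (hlub.1 (Set.mem_range_self _))⟩

theorem exists_wayBelow_ge_of_wayBelow {a b x : S} (ha : CuWayBelow a x) (hb : CuWayBelow b x) :
    ∃ y, CuWayBelow y x ∧ a ≤ y ∧ b ≤ y := by
  obtain ⟨d, hd, hmono, hlub⟩ := hCu.exists_wayBelow_seq x
  obtain ⟨i, hi⟩ := ha d hmono x hlub le_rfl
  obtain ⟨j, hj⟩ := hb d hmono x hlub le_rfl
  exact ⟨d (max i j), (hd _).trans_le (hlub.1 (Set.mem_range_self _)),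
    hi.trans (hmono (le_max_left i j)), hj.trans (hmono (le_max_right i j))⟩

theorem isLUB_nsmul (m : ℕ) {d : ℕ → S} (hd : Monotone d) {s : S}
    (hs : IsLUB (Set.range d) s) : IsLUB (Set.range fun k => m • d k) (m • s) := by
  induction m with
  | zero => simpa only [zero_smul, Set.range_const] using isLUB_singleton
  | succ m ih =>
    simpa only [succ_nsmul] using
      hCu.O4 _ d (fun i j hij => nsmul_le_nsmul_right (hd hij) m) hd _ s ih hs

/-- The recursion adds, at step `N + 1`, the element `c n k` with `N = pair n k`; it is way below
`x (N + 1)` because `n ≤ N`. -/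
theorem exists_monotone_wayBelow_dominating {x : ℕ → S} (hx : Monotone x) (c : ℕ → ℕ → S)
    (hc : ∀ n k, CuWayBelow (c n k) (x n)) :
    ∃ y : ℕ → S, Monotone y ∧ (∀ n, CuWayBelow (y n) (x n)) ∧ ∀ n k, ∃ N, c n k ≤ y N := by
  have step : ∀ N y, CuWayBelow y (x N) → ∃ y', CuWayBelow y' (x (N + 1)) ∧ y ≤ y' ∧
      c (Nat.unpair N).1 (Nat.unpair N).2 ≤ y' := fun N y hy =>
    hCu.exists_wayBelow_ge_of_wayBelow (hy.trans_le (hx N.le_succ))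
      ((hc _ _).trans_le (hx ((Nat.unpair_left_le N).trans N.le_succ)))
  choose! G hG using step
  let y : ℕ → S := fun N => Nat.rec (motive := fun _ => S) (c 0 0) G N
  have hy : ∀ N, CuWayBelow (y N) (x N) := by
    intro N
    induction N with
    | zero => exact hc 0 0
    | succ N ih => exact (hG N (y N) ih).1
  refine ⟨y, monotone_nat_of_le_succ fun N => (hG N (y N) (hy N)).2.1, hy, fun n k => ?_⟩
  refine ⟨Nat.pair n k + 1, ?_⟩
  simpa only [Nat.unpair_pair] using (hG (Nat.pair n k) _ (hy _)).2.2

end CuSemigroup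

theorem CuFullSeq.of_isLUB_ge {S : Type*} [AddCommMonoid S] [PartialOrder S]
    [IsOrderedAddMonoid S] (hCu : CuSemigroup S) {x y : ℕ → S} (hx : CuFullSeq x)
    (hy : Monotone y) {s : S} (hs : IsLUB (Set.range y) s) (hxs : ∀ n, x n ≤ s) :
    CuFullSeq y := by
  refine ⟨hy, fun z' z hz => ?_⟩
  obtain ⟨z'', hz'z'', hz''z⟩ := hCu.exists_wayBelow_between hz
  obtain ⟨n, m, hm⟩ := hx.2 z'' z hz''z
  have hz'_wb : CuWayBelow z' (m • s) :=
    hz'z''.trans_le (hm.trans (nsmul_le_nsmul_right (hxs n) m))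
  obtain ⟨k, hk⟩ := hz'_wb _ (fun i j hij => nsmul_le_nsmul_right (hy hij) m) _
    (hCu.isLUB_nsmul m hy hs) le_rfl
  exact ⟨k, m, hk⟩

/-- Every full sequence in a Cu-semigroup admits a full sequence compactly contained in it
termwise. -/
theorem stmt10 {S : Type*} [AddCommMonoid S] [PartialOrder S] [IsOrderedAddMonoid S] (hCu : CuSemigroup S)
    (x : ℕ → S) (hfull : CuFullSeq x) :
    ∃ x' : ℕ → S, CuFullSeq x' ∧ ∀ n : ℕ, CuWayBelow (x' n) (x n) := by
  choose c hc_rapid _ hc_lub using fun n => hCu.exists_wayBelow_seq (x n)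
  have hc : ∀ n k, CuWayBelow (c n k) (x n) := fun n k =>
    (hc_rapid n k).trans_le ((hc_lub n).1 (Set.mem_range_self _))
  obtain ⟨y, hy_mono, hy_wb, hy_dom⟩ := hCu.exists_monotone_wayBelow_dominating hfull.1 c hc
  obtain ⟨s, hs⟩ := hCu.O1 y hy_mono
  have hxs : ∀ n, x n ≤ s := fun n => (hc_lub n).2 <| by
    rintro _ ⟨k, rfl⟩
    obtain ⟨N, hN⟩ := hy_dom n k
    exact hN.trans (hs.1 (Set.mem_range_self N))
  exact ⟨y, hfull.of_isLUB_ge hCu hy_mono hs hxs, hy_wb⟩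
end
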